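/- Reduction of strong superadditivity to pure states: if for every unit vector φ in ℂ^{a1}⊗ℂ^{a2}⊗ℂ^{b1}⊗ℂ^{b2} (regarded as bipartite with A-part ℂ^{a1}⊗ℂ^{a2} and B-part ℂ^{b1}⊗ℂ^{b2}) one has E_F(|φ⟩⟨φ|) ≥ E_F(Tr_2 |φ⟩⟨φ|) + E_F(Tr_1 |φ⟩⟨φ|), then for every density matrix σ on ℂ^{a1}⊗ℂ^{a2}⊗ℂ^{b1}⊗ℂ^{b2} one has E_F(σ) ≥ E_F(Tr_2 σ) + E_F(Tr_1 σ). -/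

import Mathlib

open scoped Kronecker Matrix ComplexOrder

noncomputable section

/-- The von Neumann entropy `H(ρ) = -∑ᵢ λᵢ log λᵢ` of a Hermitian matrix,
where the `λᵢ` are its eigenvalues (with the convention `0 log 0 = 0`,
which holds automatically since `Real.log 0 = 0`). -/
def vNEntropy {n : Type} [Fintype n] [DecidableEq n] (ρ : Matrix n n ℂ) : ℝ :=
  if h : ρ.IsHermitian then -∑ i, h.eigenvalues i * Real.log (h.eigenvalues i) else 0

/-- A density matrix: positive semidefinite with trace 1. -/
def IsDensityMatrix {n : Type} [Fintype n] [DecidableEq n] (ρ : Matrix n n ℂ) : Prop :=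
  ρ.PosSemidef ∧ ρ.trace = 1

/-- The rank-one matrix `|v⟩⟨v|`. -/
def outer {n : Type} [Fintype n] (v : n → ℂ) : Matrix n n ℂ :=
  Matrix.vecMulVec v (star v)

/-- A unit vector. -/
def IsUnitVec {n : Type} [Fintype n] (v : n → ℂ) : Prop :=
  ∑ a, ‖v a‖ ^ 2 = 1

/-- A quantum channel, given by a finite family of Kraus operators `A k`
satisfying the completeness relation `∑ k, (A k)ᴴ * A k = 1`. -/
structure QChannel (I O : Type) [Fintype I] [DecidableEq I] [Fintype O] [DecidableEq O] :
    Type 1 where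
  ι : Type
  [instFintype : Fintype ι]
  A : ι → Matrix O I ℂ
  complete : ∑ k, (A k)ᴴ * A k = 1

attribute [instance] QChannel.instFintype

/-- The action `N(ρ) = ∑ₖ Aₖ ρ Aₖᴴ` of a channel on a matrix. -/
def QChannel.app {I O : Type} [Fintype I] [DecidableEq I] [Fintype O] [DecidableEq O]
    (N : QChannel I O) (ρ : Matrix I I ℂ) : Matrix O O ℂ :=
  ∑ k, N.A k * ρ * (N.A k)ᴴ

theorem kronecker_conjT {l m n p : Type} (A : Matrix l m ℂ) (B : Matrix n p ℂ) :
    (A ⊗ₖ B)ᴴ = Aᴴ ⊗ₖ Bᴴ := by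
  ext ⟨i, j⟩ ⟨k, s⟩
  simp [Matrix.conjTranspose_apply, mul_comm]

theorem sum_kronecker_sum {ι₁ ι₂ l m n p : Type} [Fintype ι₁] [Fintype ι₂]
    (A : ι₁ → Matrix l m ℂ) (B : ι₂ → Matrix n p ℂ) :
    (∑ i, A i) ⊗ₖ (∑ j, B j) = ∑ k : ι₁ × ι₂, A k.1 ⊗ₖ B k.2 := by
  ext ⟨x, y⟩ ⟨x', y'⟩
  simp only [Matrix.sum_apply, Matrix.kroneckerMap_apply, Finset.sum_mul_sum]
  exact (Fintype.sum_prod_type (fun k : ι₁ × ι₂ => A k.1 x x' * B k.2 y y')).symm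

/-- The tensor-product channel `N₁ ⊗ N₂`: its Kraus operators are the Kronecker
products of the Kraus operators of the two factors. -/
def QChannel.prod {I₁ O₁ I₂ O₂ : Type}
    [Fintype I₁] [DecidableEq I₁] [Fintype O₁] [DecidableEq O₁]
    [Fintype I₂] [DecidableEq I₂] [Fintype O₂] [DecidableEq O₂]
    (N₁ : QChannel I₁ O₁) (N₂ : QChannel I₂ O₂) : QChannel (I₁ × I₂) (O₁ × O₂) where
  ι := N₁.ι × N₂.ι
  A := fun k => N₁.A k.1 ⊗ₖ N₂.A k.2
  complete := by
    have h1 : ∀ k : N₁.ι × N₂.ι, (N₁.A k.1 ⊗ₖ N₂.A k.2)ᴴ * (N₁.A k.1 ⊗ₖ N₂.A k.2)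
        = ((N₁.A k.1)ᴴ * N₁.A k.1) ⊗ₖ ((N₂.A k.2)ᴴ * N₂.A k.2) := fun k => by
      rw [kronecker_conjT, Matrix.mul_kronecker_mul]
    rw [Finset.sum_congr rfl fun k _ => h1 k,
      ← sum_kronecker_sum (fun k₁ => (N₁.A k₁)ᴴ * N₁.A k₁) (fun k₂ => (N₂.A k₂)ᴴ * N₂.A k₂),
      N₁.complete, N₂.complete, Matrix.one_kronecker_one]

/-- The minimum output entropy of a channel: the minimum of `H(N(|v⟩⟨v|))`
over unit vectors `v` in the input space. -/
def minOutEntropy {I O : Type} [Fintype I] [DecidableEq I] [Fintype O] [DecidableEq O]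
    (N : QChannel I O) : ℝ :=
  sInf { x | ∃ v : I → ℂ, IsUnitVec v ∧ x = vNEntropy (N.app (outer v)) }

/-- The Holevo capacity `χ_N` of a channel. -/
def holevoCap {I O : Type} [Fintype I] [DecidableEq I] [Fintype O] [DecidableEq O]
    (N : QChannel I O) : ℝ :=
  sSup { x | ∃ (n : ℕ) (p : Fin n → ℝ) (v : Fin n → I → ℂ),
    (∀ i, 0 ≤ p i) ∧ (∑ i, p i = 1) ∧ (∀ i, IsUnitVec (v i)) ∧
    x = vNEntropy (N.app (∑ i, (p i : ℂ) • outer (v i))) -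
      ∑ i, p i * vNEntropy (N.app (outer (v i))) }

/-- The constrained Holevo capacity `χ_N(ρ)`: only ensembles averaging to `ρ` are allowed. -/
def cHolevoCap {I O : Type} [Fintype I] [DecidableEq I] [Fintype O] [DecidableEq O]
    (N : QChannel I O) (ρ : Matrix I I ℂ) : ℝ :=
  sSup { x | ∃ (n : ℕ) (p : Fin n → ℝ) (v : Fin n → I → ℂ),
    (∀ i, 0 ≤ p i) ∧ (∑ i, p i = 1) ∧ (∀ i, IsUnitVec (v i)) ∧
    (∑ i, (p i : ℂ) • outer (v i)) = ρ ∧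
    x = vNEntropy (N.app ρ) - ∑ i, p i * vNEntropy (N.app (outer (v i))) }

/-- Partial trace over the second (B) factor of a bipartite matrix. -/
def traceB {A B : Type} [Fintype B] (σ : Matrix (A × B) (A × B) ℂ) : Matrix A A ℂ :=
  Matrix.of fun a a' => ∑ b, σ (a, b) (a', b)

/-- The entanglement of formation of a bipartite state on `A ⊗ B`. -/
def entF {A B : Type} [Fintype A] [DecidableEq A] [Fintype B] [DecidableEq B]
    (σ : Matrix (A × B) (A × B) ℂ) : ℝ :=
  sInf { x | ∃ (n : ℕ) (p : Fin n → ℝ) (v : Fin n → A × B → ℂ),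
    (∀ i, 0 ≤ p i) ∧ (∀ i, IsUnitVec (v i)) ∧
    (∑ i, (p i : ℂ) • outer (v i)) = σ ∧
    x = ∑ i, p i * vNEntropy (traceB (outer (v i))) }

/-- The tensor product of two bipartite states `σ₁` on `A₁ ⊗ B₁` and `σ₂` on `A₂ ⊗ B₂`
(Kronecker product), reindexed as a bipartite state with A-part `A₁ ⊗ A₂` and
B-part `B₁ ⊗ B₂`. -/
def pairTensor {A₁ B₁ A₂ B₂ : Type}
    (σ₁ : Matrix (A₁ × B₁) (A₁ × B₁) ℂ) (σ₂ : Matrix (A₂ × B₂) (A₂ × B₂) ℂ) :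
    Matrix ((A₁ × A₂) × (B₁ × B₂)) ((A₁ × A₂) × (B₁ × B₂)) ℂ :=
  Matrix.of fun x y =>
    σ₁ (x.1.1, x.2.1) (y.1.1, y.2.1) * σ₂ (x.1.2, x.2.2) (y.1.2, y.2.2)

/-- Trace out the second subsystem (`A₂` and `B₂`) of a quadripartite state. -/
def trace2 {A₁ A₂ B₁ B₂ : Type} [Fintype A₂] [Fintype B₂]
    (σ : Matrix ((A₁ × A₂) × (B₁ × B₂)) ((A₁ × A₂) × (B₁ × B₂)) ℂ) :
    Matrix (A₁ × B₁) (A₁ × B₁) ℂ :=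
  Matrix.of fun x y => ∑ a₂, ∑ b₂, σ ((x.1, a₂), (x.2, b₂)) ((y.1, a₂), (y.2, b₂))

/-- Trace out the first subsystem (`A₁` and `B₁`) of a quadripartite state. -/
def trace1 {A₁ A₂ B₁ B₂ : Type} [Fintype A₁] [Fintype B₁]
    (σ : Matrix ((A₁ × A₂) × (B₁ × B₂)) ((A₁ × A₂) × (B₁ × B₂)) ℂ) :
    Matrix (A₂ × B₂) (A₂ × B₂) ℂ :=
  Matrix.of fun x y => ∑ a₁, ∑ b₁, σ ((a₁, x.1), (b₁, x.2)) ((a₁, y.1), (b₁, y.2))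


/-!
For any pure-state decomposition `σ = ∑ᵢ pᵢ |vᵢ⟩⟨vᵢ|`, the partial traces, being linear and
positive, decompose `Tr₂ σ = ∑ᵢ pᵢ Tr₂ |vᵢ⟩⟨vᵢ|` and `Tr₁ σ = ∑ᵢ pᵢ Tr₁ |vᵢ⟩⟨vᵢ|`. Convexity of
`E_F` and the hypothesis applied to each `vᵢ` then give
`E_F(Tr₂ σ) + E_F(Tr₁ σ) ≤ ∑ᵢ pᵢ (E_F(Tr₂ |vᵢ⟩⟨vᵢ|) + E_F(Tr₁ |vᵢ⟩⟨vᵢ|))`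
`≤ ∑ᵢ pᵢ E_F(|vᵢ⟩⟨vᵢ|) ≤ ∑ᵢ pᵢ H(Tr_B |vᵢ⟩⟨vᵢ|)`,
whose infimum over all decompositions is `E_F(σ)`. `E_F` is convex because pure-state
decompositions of states `τᵢ` concatenate, with weights `pᵢ`, into one of `∑ᵢ pᵢ τᵢ`.
-/

section PureStates

variable {n : Type} [Fintype n]

lemma outer_posSemidef (v : n → ℂ) : (outer v).PosSemidef :=
  Matrix.posSemidef_vecMulVec_self_star v

lemma trace_outer {v : n → ℂ} (hv : IsUnitVec v) : (outer v).trace = 1 := by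
  have hsq : ∀ a, v a * star (v a) = ((‖v a‖ ^ 2 : ℝ) : ℂ) := fun a => by
    rw [RCLike.star_def, Complex.mul_conj, Complex.normSq_eq_norm_sq]
  simp only [outer, Matrix.trace_vecMulVec, dotProduct, Pi.star_apply, hsq]
  exact_mod_cast hv

lemma isDensityMatrix_outer [DecidableEq n] {v : n → ℂ} (hv : IsUnitVec v) :
    IsDensityMatrix (outer v) :=
  ⟨outer_posSemidef v, trace_outer hv⟩

lemma isUnitVec_iff_norm_eq_one (v : EuclideanSpace ℂ n) : IsUnitVec ⇑v ↔ ‖v‖ = 1 := by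
  rw [EuclideanSpace.norm_eq, Real.sqrt_eq_one, IsUnitVec]

lemma Matrix.IsHermitian.eq_sum_eigenvalues_smul_outer [DecidableEq n] {A : Matrix n n ℂ}
    (hA : A.IsHermitian) :
    A = ∑ i, (hA.eigenvalues i : ℂ) • outer ⇑(hA.eigenvectorBasis i) := by
  conv_lhs => rw [hA.spectral_theorem, Unitary.conjStarAlgAut_apply]
  ext x y
  rw [Matrix.mul_apply]
  simp only [Matrix.mul_diagonal, Matrix.sum_apply, Matrix.smul_apply, outer,
    Matrix.vecMulVec_apply, smul_eq_mul, Matrix.star_apply, Pi.star_apply,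
    Matrix.IsHermitian.eigenvectorUnitary_apply, Function.comp_apply,
    RCLike.ofReal_eq_complex_ofReal]
  exact Finset.sum_congr rfl fun _ _ => by ring

end PureStates

lemma vNEntropy_nonneg {n : Type} [Fintype n] [DecidableEq n] {ρ : Matrix n n ℂ}
    (hρ : IsDensityMatrix ρ) : 0 ≤ vNEntropy ρ := by
  obtain ⟨hpsd, htr⟩ := hρ
  have hH := hpsd.isHermitian
  have hsum : ∑ i, hH.eigenvalues i = 1 := by
    have := hH.trace_eq_sum_eigenvalues.symm.trans htr
    rw [← Complex.ofReal_inj]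
    push_cast
    exact this
  have hle : ∀ i, hH.eigenvalues i ≤ 1 := fun i =>
    hsum ▸ Finset.single_le_sum (fun j _ => hpsd.eigenvalues_nonneg j) (Finset.mem_univ i)
  rw [vNEntropy, dif_pos hH, neg_nonneg]
  exact Finset.sum_nonpos fun i _ => mul_nonpos_of_nonneg_of_nonpos
    (hpsd.eigenvalues_nonneg i) (Real.log_nonpos (hpsd.eigenvalues_nonneg i) (hle i))

def sumCompressions {ι m n : Type} [Fintype ι] (f : ι → n → m) :
    Matrix m m ℂ →ₗ[ℂ] Matrix n n ℂ where
  toFun σ := ∑ k, σ.submatrix (f k) (f k)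
  map_add' σ τ := by rw [← Finset.sum_add_distrib]; rfl
  map_smul' c σ := by rw [RingHom.id_apply, Finset.smul_sum]; rfl

lemma posSemidef_sumCompressions {ι m n : Type} [Fintype ι] [Fintype m] [Fintype n]
    (f : ι → n → m) {σ : Matrix m m ℂ} (hσ : σ.PosSemidef) :
    (sumCompressions f σ).PosSemidef :=
  Finset.sum_induction _ Matrix.PosSemidef (fun _ _ => .add) .zero fun k _ => hσ.submatrix (f k)

lemma traceB_eq_sumCompressions {A B : Type} [Fintype B] (σ : Matrix (A × B) (A × B) ℂ) :
    traceB σ = sumCompressions (fun (b : B) (a : A) => (a, b)) σ := by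
  ext a a'
  simp [traceB, sumCompressions, Matrix.sum_apply]

lemma trace2_eq_sumCompressions {A₁ A₂ B₁ B₂ : Type} [Fintype A₂] [Fintype B₂]
    (σ : Matrix ((A₁ × A₂) × (B₁ × B₂)) ((A₁ × A₂) × (B₁ × B₂)) ℂ) :
    trace2 σ =
      sumCompressions (fun (k : A₂ × B₂) (x : A₁ × B₁) => ((x.1, k.1), (x.2, k.2))) σ := by
  ext x y
  simp [trace2, sumCompressions, Matrix.sum_apply, Fintype.sum_prod_type]

lemma trace1_eq_sumCompressions {A₁ A₂ B₁ B₂ : Type} [Fintype A₁] [Fintype B₁]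
    (σ : Matrix ((A₁ × A₂) × (B₁ × B₂)) ((A₁ × A₂) × (B₁ × B₂)) ℂ) :
    trace1 σ =
      sumCompressions (fun (k : A₁ × B₁) (x : A₂ × B₂) => ((k.1, x.1), (k.2, x.2))) σ := by
  ext x y
  simp [trace1, sumCompressions, Matrix.sum_apply, Fintype.sum_prod_type]

lemma trace_traceB {A B : Type} [Fintype A] [Fintype B] (σ : Matrix (A × B) (A × B) ℂ) :
    (traceB σ).trace = σ.trace := by
  simp [traceB, Matrix.trace, Fintype.sum_prod_type]

lemma IsDensityMatrix.traceB {A B : Type} [Fintype A] [DecidableEq A] [Fintype B]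
    [DecidableEq B] {σ : Matrix (A × B) (A × B) ℂ} (hσ : IsDensityMatrix σ) : IsDensityMatrix (traceB σ) :=
  ⟨traceB_eq_sumCompressions σ ▸ posSemidef_sumCompressions _ hσ.1,
    by rw [trace_traceB, hσ.2]⟩

section EntF

variable {A B : Type} [Fintype A] [DecidableEq A] [Fintype B]

def entFSet (σ : Matrix (A × B) (A × B) ℂ) : Set ℝ :=
  { x | ∃ (n : ℕ) (p : Fin n → ℝ) (v : Fin n → A × B → ℂ),
    (∀ i, 0 ≤ p i) ∧ (∀ i, IsUnitVec (v i)) ∧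
    (∑ i, (p i : ℂ) • outer (v i)) = σ ∧
    x = ∑ i, p i * vNEntropy (traceB (outer (v i))) }

lemma sum_mem_entFSet {κ : Type} [Fintype κ] (p : κ → ℝ) (v : κ → A × B → ℂ)
    (hp : ∀ k, 0 ≤ p k) (hv : ∀ k, IsUnitVec (v k)) :
    ∑ k, p k * vNEntropy (traceB (outer (v k))) ∈ entFSet (∑ k, (p k : ℂ) • outer (v k)) := by
  let e := (Fintype.equivFin κ).symm
  refine ⟨_, p ∘ e, v ∘ e, fun _ => hp _, fun _ => hv _, ?_, ?_⟩
  · exact e.sum_comp fun k => (p k : ℂ) • outer (v k)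
  · exact (e.sum_comp fun k => p k * vNEntropy (traceB (outer (v k)))).symm

lemma nonneg_of_mem_entFSet [DecidableEq B] {σ : Matrix (A × B) (A × B) ℂ} {x : ℝ}
    (hx : x ∈ entFSet σ) : 0 ≤ x := by
  obtain ⟨n, p, v, hp, hv, -, rfl⟩ := hx
  exact Finset.sum_nonneg fun i _ =>
    mul_nonneg (hp i) (vNEntropy_nonneg (isDensityMatrix_outer (hv i)).traceB)

lemma entFSet_bddBelow [DecidableEq B] (σ : Matrix (A × B) (A × B) ℂ) : BddBelow (entFSet σ) :=
  ⟨0, fun _ => nonneg_of_mem_entFSet⟩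

lemma entFSet_nonempty [DecidableEq B] {σ : Matrix (A × B) (A × B) ℂ} (hσ : σ.PosSemidef) :
    (entFSet σ).Nonempty := by
  have hmem := sum_mem_entFSet _ _ hσ.eigenvalues_nonneg fun i =>
    (isUnitVec_iff_norm_eq_one _).2 (hσ.isHermitian.eigenvectorBasis.orthonormal.1 i)
  rw [← hσ.isHermitian.eq_sum_eigenvalues_smul_outer] at hmem
  exact ⟨_, hmem⟩

lemma le_entF [DecidableEq B] {σ : Matrix (A × B) (A × B) ℂ} (hσ : σ.PosSemidef) {c : ℝ}
    (hc : ∀ x ∈ entFSet σ, c ≤ x) : c ≤ entF σ :=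
  le_csInf (entFSet_nonempty hσ) hc

lemma entF_le_of_mem [DecidableEq B] {σ : Matrix (A × B) (A × B) ℂ} {x : ℝ}
    (hx : x ∈ entFSet σ) : entF σ ≤ x :=
  csInf_le (entFSet_bddBelow σ) hx

lemma sum_mul_mem_entFSet {n : ℕ} {p : Fin n → ℝ} (hp : ∀ i, 0 ≤ p i)
    {τ : Fin n → Matrix (A × B) (A × B) ℂ} {x : Fin n → ℝ} (hx : ∀ i, x i ∈ entFSet (τ i)) :
    ∑ i, p i * x i ∈ entFSet (∑ i, (p i : ℂ) • τ i) := by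
  choose m q w hq hw hτ hx using hx
  have hmem := sum_mem_entFSet (κ := Σ i, Fin (m i)) (fun k => p k.1 * q k.1 k.2)
    (fun k => w k.1 k.2) (fun k => mul_nonneg (hp _) (hq _ _)) fun k => hw _ _
  convert hmem using 2
  · simp_rw [← hτ, Finset.smul_sum, Fintype.sum_sigma, Complex.ofReal_mul, mul_smul]
  · simp_rw [hx, Finset.mul_sum, Fintype.sum_sigma, mul_assoc]

lemma entF_sum_smul_le [DecidableEq B] {n : ℕ} {p : Fin n → ℝ} (hp : ∀ i, 0 ≤ p i)
    {τ : Fin n → Matrix (A × B) (A × B) ℂ} (hτ : ∀ i, (τ i).PosSemidef) :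
    entF (∑ i, (p i : ℂ) • τ i) ≤ ∑ i, p i * entF (τ i) := by
  refine le_of_forall_pos_le_add fun ε hε => ?_
  have hP : 0 ≤ ∑ i, p i := Finset.sum_nonneg fun i _ => hp i
  set δ := ε / (∑ i, p i + 1)
  have hδ : 0 < δ := by positivity
  choose x hx hxτ using fun i =>
    exists_lt_of_csInf_lt (entFSet_nonempty (hτ i)) (lt_add_of_pos_right (entF (τ i)) hδ)
  calc entF (∑ i, (p i : ℂ) • τ i)
      ≤ ∑ i, p i * x i := entF_le_of_mem (sum_mul_mem_entFSet hp hx)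
    _ ≤ ∑ i, p i * (entF (τ i) + δ) := by gcongr with i; exacts [hp i, (hxτ i).le]
    _ = ∑ i, p i * entF (τ i) + (∑ i, p i) * δ := by
        simp only [mul_add, Finset.sum_add_distrib, ← Finset.sum_mul]
    _ ≤ ∑ i, p i * entF (τ i) + ε := by
        gcongr
        calc (∑ i, p i) * δ ≤ (∑ i, p i + 1) * δ := by gcongr; linarith
          _ = ε := mul_div_cancel₀ ε (by positivity)

lemma entF_outer_le [DecidableEq B] {v : A × B → ℂ} (hv : IsUnitVec v) :
    entF (outer v) ≤ vNEntropy (traceB (outer v)) := by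
  simpa using entF_le_of_mem (sum_mem_entFSet (κ := Unit) (fun _ => 1) (fun _ => v)
    (fun _ => zero_le_one) fun _ => hv)

end EntF

lemma entF_map_sum_smul_outer_le {m A B : Type} [Fintype m] [Fintype A] [DecidableEq A]
    [Fintype B] [DecidableEq B] (Φ : Matrix m m ℂ →ₗ[ℂ] Matrix (A × B) (A × B) ℂ)
    (hΦ : ∀ ρ, ρ.PosSemidef → (Φ ρ).PosSemidef) {n : ℕ} {p : Fin n → ℝ} (hp : ∀ i, 0 ≤ p i)
    (v : Fin n → m → ℂ) :
    entF (Φ (∑ i, (p i : ℂ) • outer (v i))) ≤ ∑ i, p i * entF (Φ (outer (v i))) := by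
  simpa only [map_sum, map_smul] using entF_sum_smul_le hp fun i => hΦ _ (outer_posSemidef (v i))

/-- Reduction of strong superadditivity of `E_F` to pure states: if strong
superadditivity holds for all quadripartite pure states, it holds for all quadripartite
density matrices. -/
theorem strong_superadditivity_reduces_to_pure_states {a₁ a₂ b₁ b₂ : ℕ}
    (h : ∀ φ : (Fin a₁ × Fin a₂) × (Fin b₁ × Fin b₂) → ℂ, IsUnitVec φ →
      entF (outer φ) ≥ entF (trace2 (outer φ)) + entF (trace1 (outer φ))) :
    ∀ σ : Matrix ((Fin a₁ × Fin a₂) × (Fin b₁ × Fin b₂))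
        ((Fin a₁ × Fin a₂) × (Fin b₁ × Fin b₂)) ℂ,
      IsDensityMatrix σ → entF σ ≥ entF (trace2 σ) + entF (trace1 σ) := by
  intro σ hσ
  refine le_entF hσ.1 ?_
  rintro _ ⟨n, p, v, hp, hv, rfl, rfl⟩
  have h₂ : entF (trace2 (∑ i, (p i : ℂ) • outer (v i))) ≤
      ∑ i, p i * entF (trace2 (outer (v i))) := by
    simpa only [trace2_eq_sumCompressions] using
      entF_map_sum_smul_outer_le _ (fun _ => posSemidef_sumCompressions _) hp v
  have h₁ : entF (trace1 (∑ i, (p i : ℂ) • outer (v i))) ≤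
      ∑ i, p i * entF (trace1 (outer (v i))) := by
    simpa only [trace1_eq_sumCompressions] using
      entF_map_sum_smul_outer_le _ (fun _ => posSemidef_sumCompressions _) hp v
  calc entF (trace2 _) + entF (trace1 _)
      ≤ ∑ i, p i * (entF (trace2 (outer (v i))) + entF (trace1 (outer (v i)))) := by
        simpa only [mul_add, Finset.sum_add_distrib] using add_le_add h₂ h₁
    _ ≤ ∑ i, p i * entF (outer (v i)) := by gcongr with i; exacts [hp i, h (v i) (hv i)]
    _ ≤ ∑ i, p i * vNEntropy (traceB (outer (v i))) := by
        gcongr with i; exacts [hp i, entF_outer_le (hv i)]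

end
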